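/- Suppose b·(n+1) ≠ a·(m+1) and c·(m+1) ≠ d·(n+1) (these conditions say that s₂ differs from s₁ and from s₃ whenever the latter are defined). Then lim_{s→s₂} (s−s₂)·Z_{n,m}(s) = −((b−d)·(n+1) + (c−a)·(m+1)) / ((a·(m+1) − b·(n+1))·(c·(m+1) − d·(n+1))), which is nonzero; consequently s₂ is a pole of order exactly one of Z_{n,m}. -/

import Mathlib

/-- The local topological zeta function of the monomial ideal
`I = (x^a y^b, x^c y^d) ⊆ ℂ[x,y]` with respect to the volume form
`x^n y^m dx ∧ dy`, as a function `ℚ → ℚ`. -/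
noncomputable def Z (a b c d n m : ℕ) (s : ℚ) : ℚ :=
  ((c : ℚ) - a) /
      (((a : ℚ) * s + n + 1) *
        (((b : ℚ) * c - (a : ℚ) * d) * s + ((b : ℚ) - d) * (n + 1) + ((c : ℚ) - a) * (m + 1))) +
    ((b : ℚ) - d) /
      ((((b : ℚ) * c - (a : ℚ) * d) * s + ((b : ℚ) - d) * (n + 1) + ((c : ℚ) - a) * (m + 1)) *
        ((d : ℚ) * s + m + 1))

/-- `s₀` is a pole of order `k` of `Z` if `lim_{s → s₀} (s - s₀)^k * Z s`
exists and is nonzero. -/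
def IsPoleOfOrder (Z : ℚ → ℚ) (s₀ : ℚ) (k : ℕ) : Prop :=
  ∃ L : ℚ, L ≠ 0 ∧
    Filter.Tendsto (fun s => (s - s₀) ^ k * Z s) (nhdsWithin s₀ {s₀}ᶜ) (nhds L)

/-- `s₀` is a pole of `Z` if it is a pole of some order `k ≥ 1`. -/
def IsPole (Z : ℚ → ℚ) (s₀ : ℚ) : Prop :=
  ∃ k : ℕ, 1 ≤ k ∧ IsPoleOfOrder Z s₀ k

/-!
Clearing denominators, `Z = R / ℓ` with `ℓ s = (bc - ad) s + N` the linear form vanishing at `s₂`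
and `R s = (c - a)/(a s + n + 1) + (b - d)/(d s + m + 1)`, so `(s - s₂) Z s = R s / (bc - ad)` is
continuous at `s₂`. Writing `u = b(n+1) - a(m+1)` and `v = c(m+1) - d(n+1)`, the two other linear
factors take the values `(c - a) u / (bc - ad)` and `(b - d) v / (bc - ad)` at `s₂`, so the residue is
`1/u + 1/v = N/(uv)`, nonzero because `N > 0`. Any higher power of `s - s₂` then drives the product
to `0`.
-/

open Filter Topology

theorem IsPoleOfOrder.not_of_lt {f : ℚ → ℚ} {s₀ : ℚ} {k j : ℕ} (hk : IsPoleOfOrder f s₀ k)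
    (hkj : k < j) : ¬ IsPoleOfOrder f s₀ j := by
  rintro ⟨L', hL', hj⟩
  obtain ⟨L, -, hk⟩ := hk
  have hpow : Tendsto (fun s => (s - s₀) ^ (j - k)) (𝓝[≠] s₀) (𝓝 0) := by
    have : Tendsto (fun s => (s - s₀) ^ (j - k)) (𝓝 s₀) (𝓝 ((s₀ - s₀) ^ (j - k))) :=
      ((continuous_sub_right s₀).pow _).tendsto s₀
    rw [sub_self, zero_pow (by omega)] at this
    exact this.mono_left nhdsWithin_le_nhds
  have hzero : Tendsto (fun s => (s - s₀) ^ j * f s) (𝓝[≠] s₀) (𝓝 0) := by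
    convert hpow.mul hk using 2 with s
    · rw [← mul_assoc, ← pow_add, Nat.sub_add_cancel hkj.le]
    · rw [zero_mul]
  exact hL' (tendsto_nhds_unique hj hzero)

theorem tendsto_sub_mul_nhdsNE_of_continuousAt {K : Type*} [Ring K] [TopologicalSpace K]
    {f g : K → K} {s₀ : K} (hg : ContinuousAt g s₀) (hfg : ∀ s ≠ s₀, (s - s₀) * f s = g s) :
    Tendsto (fun s => (s - s₀) * f s) (𝓝[≠] s₀) (𝓝 (g s₀)) :=
  (hg.tendsto.mono_left nhdsWithin_le_nhds).congr'
    (eventually_nhdsWithin_of_forall fun s hs => (hfg s hs).symm)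

section ResidueAlgebra

variable {K : Type*} [Field K] {a b c d ν μ : K}

theorem mul_add_eq_mul_sub_neg_div {D : K} (hD : D ≠ 0) (N s : K) :
    D * s + N = D * (s - -N / D) := by
  field_simp
  ring

theorem mul_neg_div_add_eq_left (hD : b * c - a * d ≠ 0) :
    a * (-((b - d) * ν + (c - a) * μ) / (b * c - a * d)) + ν =
      (c - a) * (b * ν - a * μ) / (b * c - a * d) := by
  rw [mul_div_assoc', div_add' _ _ _ hD]
  congr 1
  ring

theorem mul_neg_div_add_eq_right (hD : b * c - a * d ≠ 0) :
    d * (-((b - d) * ν + (c - a) * μ) / (b * c - a * d)) + μ =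
      (b - d) * (c * μ - d * ν) / (b * c - a * d) := by
  rw [mul_div_assoc', div_add' _ _ _ hD]
  congr 1
  ring

theorem div_div_mul_add_div_div_mul {p q u v D : K} (hp : p ≠ 0) (hq : q ≠ 0) (hu : u ≠ 0)
    (hv : v ≠ 0) (hD : D ≠ 0) :
    (p / (p * u / D) + q / (q * v / D)) / D = (u + v) / (u * v) := by
  field_simp
  ring

theorem add_div_mul_eq_neg_div :
    ((b * ν - a * μ) + (c * μ - d * ν)) / ((b * ν - a * μ) * (c * μ - d * ν)) =
      -((b - d) * ν + (c - a) * μ) / ((a * μ - b * ν) * (c * μ - d * ν)) := by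
  rw [← neg_sub (b * ν) (a * μ), neg_mul, div_neg, ← neg_div]
  congr 1
  ring

end ResidueAlgebra

section ZetaFunction

variable {a b c d n m : ℕ}

theorem Z_eq_div (s : ℚ) :
    Z a b c d n m s =
      (((c : ℚ) - a) / (a * s + n + 1) + ((b : ℚ) - d) / (d * s + m + 1)) /
        (((b : ℚ) * c - a * d) * s + (((b : ℚ) - d) * (n + 1) + ((c : ℚ) - a) * (m + 1))) := by
  rw [Z, add_div, div_div, div_div, mul_comm ((d : ℚ) * s + m + 1), ← add_assoc]

theorem tendsto_sub_mul_Z (hac : a < c) (hdb : d < b) (h21 : b * (n + 1) ≠ a * (m + 1))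
    (h23 : c * (m + 1) ≠ d * (n + 1)) :
    Tendsto
      (fun s => (s - (-(((b : ℚ) - d) * (n + 1) + ((c : ℚ) - a) * (m + 1)) /
        ((b : ℚ) * c - (a : ℚ) * d))) * Z a b c d n m s)
      (𝓝[≠] (-(((b : ℚ) - d) * (n + 1) + ((c : ℚ) - a) * (m + 1)) / ((b : ℚ) * c - (a : ℚ) * d)))
      (𝓝 (-(((b : ℚ) - d) * (n + 1) + ((c : ℚ) - a) * (m + 1)) /
        (((a : ℚ) * (m + 1) - (b : ℚ) * (n + 1)) * ((c : ℚ) * (m + 1) - (d : ℚ) * (n + 1))))) := by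
  have hac' : (a : ℚ) < c := by exact_mod_cast hac
  have hdb' : (d : ℚ) < b := by exact_mod_cast hdb
  have hca : (c : ℚ) - a ≠ 0 := (sub_pos.mpr hac').ne'
  have hbd : (b : ℚ) - d ≠ 0 := (sub_pos.mpr hdb').ne'
  have hD : (b : ℚ) * c - a * d ≠ 0 :=
    (sub_pos.mpr (by
      simpa only [mul_comm] using mul_lt_mul'' hac' hdb' a.cast_nonneg d.cast_nonneg)).ne'
  have hu : (b : ℚ) * (n + 1) - a * (m + 1) ≠ 0 := sub_ne_zero.mpr (by exact_mod_cast h21)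
  have hv : (c : ℚ) * (m + 1) - d * (n + 1) ≠ 0 := sub_ne_zero.mpr (by exact_mod_cast h23)
  set N : ℚ := ((b : ℚ) - d) * (n + 1) + ((c : ℚ) - a) * (m + 1)
  set D : ℚ := (b : ℚ) * c - a * d
  have hA : (a : ℚ) * (-N / D) + n + 1 = (c - a) * (b * (n + 1) - a * (m + 1)) / D := by
    rw [add_assoc]
    exact mul_neg_div_add_eq_left hD
  have hB : (d : ℚ) * (-N / D) + m + 1 = (b - d) * (c * (m + 1) - d * (n + 1)) / D := by
    rw [add_assoc]
    exact mul_neg_div_add_eq_right hD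
  set R : ℚ → ℚ := fun s => ((c : ℚ) - a) / (a * s + n + 1) + ((b : ℚ) - d) / (d * s + m + 1)
  have hR : ContinuousAt (fun s => R s / D) (-N / D) := by
    refine ((continuousAt_const.div (by fun_prop) ?_).add
      (continuousAt_const.div (by fun_prop) ?_)).div_const D
    · rw [hA]; exact div_ne_zero (mul_ne_zero hca hu) hD
    · rw [hB]; exact div_ne_zero (mul_ne_zero hbd hv) hD
  have hZ : ∀ s ≠ -N / D, (s - -N / D) * Z a b c d n m s = R s / D := by
    intro s hs
    rw [Z_eq_div, mul_add_eq_mul_sub_neg_div hD N s, mul_div_assoc', mul_comm D,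
      mul_div_mul_left _ _ (sub_ne_zero.mpr hs)]
  convert tendsto_sub_mul_nhdsNE_of_continuousAt hR hZ using 2
  dsimp only [R]
  rw [hA, hB, div_div_mul_add_div_div_mul hca hbd hu hv hD, add_div_mul_eq_neg_div]

theorem Z_residue_ne_zero (hac : a < c) (hdb : d < b) (h21 : b * (n + 1) ≠ a * (m + 1))
    (h23 : c * (m + 1) ≠ d * (n + 1)) :
    -(((b : ℚ) - d) * (n + 1) + ((c : ℚ) - a) * (m + 1)) /
      (((a : ℚ) * (m + 1) - (b : ℚ) * (n + 1)) * ((c : ℚ) * (m + 1) - (d : ℚ) * (n + 1))) ≠ 0 := by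
  have hbd : (0 : ℚ) < b - d := sub_pos.mpr (by exact_mod_cast hdb)
  have hca : (0 : ℚ) < c - a := sub_pos.mpr (by exact_mod_cast hac)
  have hN : (0 : ℚ) < (b - d) * (n + 1) + (c - a) * (m + 1) :=
    add_pos (mul_pos hbd (by positivity)) (mul_pos hca (by positivity))
  refine div_ne_zero (neg_ne_zero.mpr hN.ne') (mul_ne_zero ?_ ?_)
  · exact sub_ne_zero.mpr (by exact_mod_cast h21.symm)
  · exact sub_ne_zero.mpr (by exact_mod_cast h23)

end ZetaFunction

theorem stmt4 (a b c d n m : ℕ) (hac : a < c) (hdb : d < b)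
    (h21 : b * (n + 1) ≠ a * (m + 1))
    (h23 : c * (m + 1) ≠ d * (n + 1)) :
    Filter.Tendsto
        (fun s =>
          (s - (-(((b : ℚ) - d) * (n + 1) + ((c : ℚ) - a) * (m + 1)) /
            ((b : ℚ) * c - (a : ℚ) * d))) * Z a b c d n m s)
        (nhdsWithin
          (-(((b : ℚ) - d) * (n + 1) + ((c : ℚ) - a) * (m + 1)) /
            ((b : ℚ) * c - (a : ℚ) * d))
          {(-(((b : ℚ) - d) * (n + 1) + ((c : ℚ) - a) * (m + 1)) /
            ((b : ℚ) * c - (a : ℚ) * d))}ᶜ)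
        (nhds (-(((b : ℚ) - d) * (n + 1) + ((c : ℚ) - a) * (m + 1)) /
          (((a : ℚ) * (m + 1) - (b : ℚ) * (n + 1)) *
            ((c : ℚ) * (m + 1) - (d : ℚ) * (n + 1))))) ∧
      -(((b : ℚ) - d) * (n + 1) + ((c : ℚ) - a) * (m + 1)) /
          (((a : ℚ) * (m + 1) - (b : ℚ) * (n + 1)) *
            ((c : ℚ) * (m + 1) - (d : ℚ) * (n + 1))) ≠ 0 ∧
      IsPoleOfOrder (Z a b c d n m)
        (-(((b : ℚ) - d) * (n + 1) + ((c : ℚ) - a) * (m + 1)) /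
          ((b : ℚ) * c - (a : ℚ) * d)) 1 ∧
      ∀ k : ℕ, 1 ≤ k → k ≠ 1 →
        ¬ IsPoleOfOrder (Z a b c d n m)
          (-(((b : ℚ) - d) * (n + 1) + ((c : ℚ) - a) * (m + 1)) /
            ((b : ℚ) * c - (a : ℚ) * d)) k := by
  have hlim := tendsto_sub_mul_Z hac hdb h21 h23
  have hL := Z_residue_ne_zero hac hdb h21 h23
  have hpole : IsPoleOfOrder (Z a b c d n m)
      (-(((b : ℚ) - d) * (n + 1) + ((c : ℚ) - a) * (m + 1)) / ((b : ℚ) * c - (a : ℚ) * d)) 1 :=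
    ⟨_, hL, by simpa only [pow_one] using hlim⟩
  exact ⟨hlim, hL, hpole, fun k hk hk1 => hpole.not_of_lt (by omega)⟩
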